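/- Let xs < xt be integers, C ≥ 0 a real number, and f : ℤ → ℝ a function satisfying the Ameso(C) condition on [xs,xt]. Suppose there exist x0 ∈ [xs,xt] and a positive integer b with xs ≤ x0 − b such that (a) f(x0) = min over y ∈ [x0−b, x0] of f(y), and (b) f(x0) + C ≤ max over y ∈ [x0−b, x0] of f(y). Then f(x0) = min over y ∈ [xs, x0] of f(y). -/

import Mathlib

/-- Ceiling of `(x+y)/2` as a rational. -/
def mceil (x y : ℤ) : ℤ := ⌈((x : ℚ) + (y : ℚ)) / 2⌉

/-- Floor of `(x+y)/2` as a rational. -/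
def mfloor (x y : ℤ) : ℤ := ⌊((x : ℚ) + (y : ℚ)) / 2⌋

/-!
Suppose some `z ∈ [xs, x0]` had `f z < f x0`; by (a), `z < x0 - b`. Let `p` be the leftmost
maximiser of `f` on `[z, x0]`; by (b), `f p ≥ f x0 + C`, and by (a) `f (x0 - 1) ≥ f x0`, so `p < x0`.
The reflection `2p - x0` of `x0` in `p` cannot lie in `[z, x0]`, since Ameso(C) for the pair
`(2p - x0, x0)` would make it a maximiser left of `p`. Hence the reflection `2p - z` of `z` lies in
`[p, x0]`, and Ameso(C) for the pair `(z, 2p - z)` gives `f z ≥ f p - C ≥ f x0`.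
-/

theorem mceil_eq_of_add_eq {x y p : ℤ} (h : x + y = 2 * p) : mceil x y = p := by
  have hq : ((x : ℚ) + y) / 2 = p := by
    rw [← Int.cast_add, h]
    push_cast
    ring
  rw [mceil, hq, Int.ceil_intCast]

theorem mfloor_eq_of_add_eq {x y p : ℤ} (h : x + y = 2 * p) : mfloor x y = p := by
  have hq : ((x : ℚ) + y) / 2 = p := by
    rw [← Int.cast_add, h]
    push_cast
    ring
  rw [mfloor, hq, Int.floor_intCast]

theorem Finset.exists_least_maximizer {α β : Type*} [LinearOrder α] [LinearOrder β]
    {s : Finset α} (hs : s.Nonempty) (f : α → β) :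
    ∃ p ∈ s, (∀ q ∈ s, f q ≤ f p) ∧ ∀ q ∈ s, f p ≤ f q → p ≤ q := by
  obtain ⟨m, hms, hm⟩ := s.exists_max_image f hs
  have hargmax : (s.filter fun q => f m ≤ f q).Nonempty := ⟨m, by simp [hms]⟩
  obtain ⟨hps, hp⟩ := Finset.mem_filter.1 (Finset.min'_mem _ hargmax)
  refine ⟨_, hps, fun q hq => (hm q hq).trans hp, fun q hq hpq => ?_⟩
  exact Finset.min'_le _ _ (Finset.mem_filter.2 ⟨hq, hp.trans hpq⟩)

def AmesoOn (C : ℝ) (f : ℤ → ℝ) (s t : ℤ) : Prop :=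
  ∀ x ∈ Finset.Icc s t, ∀ y ∈ Finset.Icc s t, f x + f y + C ≥ f (mceil x y) + f (mfloor x y)

namespace AmesoOn

variable {C : ℝ} {f : ℤ → ℝ} {s t : ℤ}

theorem mono {s' t' : ℤ} (hf : AmesoOn C f s t) (hs : s ≤ s') (ht : t' ≤ t) :
    AmesoOn C f s' t' := fun x hx y hy =>
  hf x (Finset.Icc_subset_Icc hs ht hx) y (Finset.Icc_subset_Icc hs ht hy)

theorem two_mul_le {x y p : ℤ} (hf : AmesoOn C f s t) (hx : x ∈ Finset.Icc s t)
    (hy : y ∈ Finset.Icc s t) (hxy : x + y = 2 * p) : 2 * f p ≤ f x + f y + C := by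
  have := hf x hx y hy
  rw [mceil_eq_of_add_eq hxy, mfloor_eq_of_add_eq hxy] at this
  linarith

theorem le_left_add_of_least_maximizer {p : ℤ} (hf : AmesoOn C f s t)
    (hp : p ∈ Finset.Icc s t) (hmax : ∀ q ∈ Finset.Icc s t, f q ≤ f p)
    (hleast : ∀ q ∈ Finset.Icc s t, f p ≤ f q → p ≤ q) (hpt : p < t) (ht : f t + C ≤ f p) :
    f p ≤ f s + C := by
  obtain ⟨hsp, -⟩ := Finset.mem_Icc.1 hp
  have hts : t ∈ Finset.Icc s t := Finset.mem_Icc.2 ⟨by omega, le_rfl⟩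
  have hreflect_t : 2 * p - t < s := by
    by_contra! h
    have hq : 2 * p - t ∈ Finset.Icc s t := Finset.mem_Icc.2 ⟨h, by omega⟩
    have := hf.two_mul_le (p := p) hq hts (by ring)
    have := hleast _ hq (by linarith)
    omega
  have hr : 2 * p - s ∈ Finset.Icc s t := Finset.mem_Icc.2 ⟨by omega, by omega⟩
  have := hf.two_mul_le (p := p) (Finset.mem_Icc.2 ⟨le_rfl, by omega⟩) hr (by ring)
  linarith [hmax _ hr]

end AmesoOn

/-- Lemma 5 (narrowing to the left): if `f(x0)` is the minimum of `f` on `[x0-b, x0]`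
and `f(x0) + C ≤ max_{[x0-b, x0]} f`, then `f(x0)` is the minimum of `f` on `[xs, x0]`. -/
theorem ameso_narrow_left
    (xs xt : ℤ) (C : ℝ) (f : ℤ → ℝ)
    (hAmeso : ∀ x ∈ Finset.Icc xs xt, ∀ y ∈ Finset.Icc xs xt,
      f x + f y + C ≥ f (mceil x y) + f (mfloor x y))
    (x0 : ℤ) (hx0l : xs ≤ x0) (hx0r : x0 ≤ xt)
    (b : ℤ) (hb : 0 < b)
    (hmin : f x0 = (Finset.Icc (x0 - b) x0).inf' (Finset.nonempty_Icc.2 (by omega)) f)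
    (hmax : f x0 + C ≤ (Finset.Icc (x0 - b) x0).sup' (Finset.nonempty_Icc.2 (by omega)) f) :
    f x0 = (Finset.Icc xs x0).inf' (Finset.nonempty_Icc.2 (by omega)) f := by
  refine le_antisymm (Finset.le_inf' _ _ fun z hz => ?_) (Finset.inf'_le _ (by simp [hx0l]))
  obtain ⟨hzl, hzr⟩ := Finset.mem_Icc.1 hz
  by_contra! hz_lt
  have hmin_le : ∀ y ∈ Finset.Icc (x0 - b) x0, f x0 ≤ f y := fun y hy =>
    hmin ▸ Finset.inf'_le f hy
  have hz_left : z < x0 - b := by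
    by_contra! h
    exact (hmin_le z (Finset.mem_Icc.2 ⟨h, hzr⟩)).not_gt hz_lt
  obtain ⟨w, hw, hfw⟩ :=
    Finset.exists_mem_eq_sup' (Finset.nonempty_Icc.2 (show x0 - b ≤ x0 by omega)) f
  obtain ⟨p, hp, hpmax, hpleast⟩ :=
    Finset.exists_least_maximizer (Finset.nonempty_Icc.2 hzr) f
  have hp_ge : f x0 + C ≤ f p := (hfw ▸ hmax).trans
    (hpmax w (Finset.Icc_subset_Icc hz_left.le le_rfl hw))
  have hpx0 : p < x0 := by
    by_contra! h
    have hpx : p = x0 := le_antisymm (Finset.mem_Icc.1 hp).2 h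
    have := hpleast (x0 - 1) (Finset.mem_Icc.2 ⟨by omega, by omega⟩)
      (hpx ▸ hmin_le _ (Finset.mem_Icc.2 ⟨by omega, by omega⟩))
    omega
  have hf : AmesoOn C f z x0 := AmesoOn.mono hAmeso hzl hx0r
  have := hf.le_left_add_of_least_maximizer hp hpmax hpleast hpx0 hp_ge
  linarith
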